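/- The lifting map m preserves the edge-squared distance to the source: letting d₂′ denote the edge-squared metric on the image point set m(P) ⊂ ℝⁿ, one has d₂′(m(s), m(p)) = d₂(s, p) for all p ∈ P. -/

import Mathlib

/-!
Each step of the lift adds a new orthogonal coordinate whose square is the increment of
`d₂(s, ·)`, so by Pythagoras `‖m pⱼ - m pᵢ‖² = d₂(s, pⱼ) - d₂(s, pᵢ)` for `i ≤ j`. Hence the
potential `x ↦ ‖x - m s‖²` grows by at most the squared length of any edge of `m(P)`, and
telescoping along a chain shows that every chain from `m s` to `m pᵢ` costs at least
`‖m pᵢ - m s‖² = d₂(s, pᵢ)`; the direct edge attains this.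
-/

open scoped BigOperators
open MeasureTheory

noncomputable section

/-- Points of `ℝ^d`. -/
abbrev Pt (d : ℕ) : Type := EuclideanSpace ℝ (Fin d)

/-- The edge-squared metric on a point set `P ⊆ ℝ^d`: the infimum over finite chains of points
of `P` from `a` to `b` of the sum of squared Euclidean lengths of the steps. -/
noncomputable def edgeSq {d : ℕ} (P : Set (Pt d)) (a b : Pt d) : ℝ :=
  sInf {c : ℝ | ∃ (k : ℕ) (p : Fin (k + 1) → Pt d), p 0 = a ∧ p (Fin.last k) = b ∧
    (∀ i, p i ∈ P) ∧ c = ∑ i : Fin k, ‖p i.succ - p i.castSucc‖ ^ 2}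

theorem Fin.sum_succ_sub_castSucc {M : Type*} [AddCommGroup M] {k : ℕ} (f : Fin (k + 1) → M) :
    ∑ i : Fin k, (f i.succ - f i.castSucc) = f (Fin.last k) - f 0 := by
  rw [Finset.sum_sub_distrib, sub_eq_sub_iff_add_eq_add, add_comm _ (f 0), ← Fin.sum_univ_succ,
    Fin.sum_univ_castSucc, add_comm]

theorem EuclideanSpace.norm_add_smul_single_sq {ι : Type*} [Fintype ι] [DecidableEq ι]
    {x : EuclideanSpace ℝ ι} {t : ι} (hx : x t = 0) (c : ℝ) :
    ‖x + c • EuclideanSpace.single t 1‖ ^ 2 = ‖x‖ ^ 2 + c ^ 2 := by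
  have horth : inner ℝ x (c • EuclideanSpace.single t (1 : ℝ)) = 0 := by
    rw [real_inner_smul_right, EuclideanSpace.inner_single_right, hx]
    simp
  rw [sq, sq, norm_add_sq_eq_norm_sq_add_norm_sq_real horth, norm_smul, PiLp.norm_single]
  simp [sq]

section EdgeSq

variable {d : ℕ} {P : Set (Pt d)} {a b : Pt d}

theorem bddBelow_chainCosts (P : Set (Pt d)) (a b : Pt d) :
    BddBelow {c : ℝ | ∃ (k : ℕ) (p : Fin (k + 1) → Pt d), p 0 = a ∧ p (Fin.last k) = b ∧
      (∀ i, p i ∈ P) ∧ c = ∑ i : Fin k, ‖p i.succ - p i.castSucc‖ ^ 2} := by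
  refine ⟨0, ?_⟩
  rintro c ⟨k, q, -, -, -, rfl⟩
  positivity

theorem edgeSq_le_norm_sub_sq (ha : a ∈ P) (hb : b ∈ P) : edgeSq P a b ≤ ‖b - a‖ ^ 2 := by
  refine csInf_le (bddBelow_chainCosts P a b) ⟨1, ![a, b], rfl, rfl, ?_, by simp⟩
  intro i
  fin_cases i <;> assumption

theorem edgeSq_self (ha : a ∈ P) : edgeSq P a a = 0 := by
  refine le_antisymm ?_ (Real.sInf_nonneg ?_)
  · simpa using edgeSq_le_norm_sub_sq ha ha
  · rintro c ⟨k, q, -, -, -, rfl⟩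
    positivity

theorem sub_le_edgeSq (f : Pt d → ℝ) (hf : ∀ x ∈ P, ∀ y ∈ P, f y - f x ≤ ‖y - x‖ ^ 2)
    (ha : a ∈ P) (hb : b ∈ P) : f b - f a ≤ edgeSq P a b := by
  refine le_csInf ⟨_, ⟨1, ![a, b], rfl, rfl, ?_, rfl⟩⟩ ?_
  · intro i
    fin_cases i <;> assumption
  rintro c ⟨k, q, rfl, rfl, hq, rfl⟩
  rw [← Fin.sum_succ_sub_castSucc (fun i => f (q i))]
  exact Finset.sum_le_sum fun i _ => hf _ (hq _) _ (hq _)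

theorem edgeSq_eq_norm_sub_sq_of_potential (f : Pt d → ℝ)
    (hf : ∀ x ∈ P, ∀ y ∈ P, f y - f x ≤ ‖y - x‖ ^ 2) (ha : a ∈ P) (hb : b ∈ P)
    (hab : f b - f a = ‖b - a‖ ^ 2) : edgeSq P a b = ‖b - a‖ ^ 2 :=
  le_antisymm (edgeSq_le_norm_sub_sq ha hb) (hab ▸ sub_le_edgeSq f hf ha hb)

theorem edgeSq_range_eq_sub {ι : Type*} [LinearOrder ι] (v : ι → Pt d) (g : ι → ℝ)
    (hv : ∀ i j, i ≤ j → ‖v j - v i‖ ^ 2 = g j - g i) {i₀ : ι} (hi₀ : ∀ i, i₀ ≤ i) (i : ι) :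
    edgeSq (Set.range v) (v i₀) (v i) = g i - g i₀ := by
  rw [← hv i₀ i (hi₀ i)]
  refine edgeSq_eq_norm_sub_sq_of_potential (‖· - v i₀‖ ^ 2) ?_ ⟨i₀, rfl⟩ ⟨i, rfl⟩ (by simp)
  rintro _ ⟨k, rfl⟩ _ ⟨l, rfl⟩
  rw [hv i₀ k (hi₀ k), hv i₀ l (hi₀ l)]
  rcases le_total k l with hkl | hlk
  · rw [hv k l hkl]; linarith
  · linarith [hv l k hlk, sq_nonneg ‖v l - v k‖, sq_nonneg ‖v k - v l‖]

end EdgeSq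

section Lift

variable {n : ℕ} {v : Fin (n + 1) → EuclideanSpace ℝ (Fin (n + 1))} {c : Fin n → ℝ}

theorem lift_sub_apply_eq_zero_of_lt
    (hv : ∀ k : Fin n, v k.succ = v k.castSucc + c k • EuclideanSpace.single k.succ 1)
    {i j t : Fin (n + 1)} (hij : i ≤ j) (hjt : j < t) : (v j - v i) t = 0 := by
  induction j using Fin.induction with
  | zero => simp [Fin.le_zero_iff.1 hij]
  | succ k ih =>
    rcases hij.lt_or_eq with hlt | rfl
    · have hk := ih (Fin.le_castSucc_iff.2 hlt) (Fin.castSucc_lt_succ.trans hjt)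
      rw [hv k, add_sub_right_comm, PiLp.add_apply, hk, PiLp.smul_apply,
        PiLp.single_apply, if_neg hjt.ne']
      simp
    · simp

theorem lift_norm_sub_sq
    (hv : ∀ k : Fin n, v k.succ = v k.castSucc + c k • EuclideanSpace.single k.succ 1)
    {g : Fin (n + 1) → ℝ} (hc : ∀ k : Fin n, c k ^ 2 = g k.succ - g k.castSucc)
    (i j : Fin (n + 1)) (hij : i ≤ j) : ‖v j - v i‖ ^ 2 = g j - g i := by
  induction j using Fin.induction with
  | zero => simp [Fin.le_zero_iff.1 hij]
  | succ k ih =>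
    rcases hij.lt_or_eq with hlt | rfl
    · have hik := Fin.le_castSucc_iff.2 hlt
      rw [hv k, add_sub_right_comm, EuclideanSpace.norm_add_smul_single_sq
        (lift_sub_apply_eq_zero_of_lt hv hik Fin.castSucc_lt_succ), ih hik, hc]
      ring
    · simp

end Lift

theorem liftMap_preserves_edgeSq (d n : ℕ) (P : Set (Pt d)) (p : Fin (n + 1) → Pt d)
    (hP : P = Set.range p)
    (hmono : ∀ i j : Fin (n + 1), i ≤ j → edgeSq P (p 0) (p i) ≤ edgeSq P (p 0) (p j))
    (m : Fin (n + 1) → EuclideanSpace ℝ (Fin (n + 1)))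
    (hrec : ∀ i : Fin n, m i.succ = m i.castSucc +
      Real.sqrt (edgeSq P (p 0) (p i.succ) - edgeSq P (p 0) (p i.castSucc)) •
        EuclideanSpace.single i.succ (1 : ℝ)) :
    ∀ i : Fin (n + 1),
      edgeSq (Set.range m) (m 0) (m i) = edgeSq P (p 0) (p i) := by
  intro i
  have hsq : ∀ k : Fin n,
      Real.sqrt (edgeSq P (p 0) (p k.succ) - edgeSq P (p 0) (p k.castSucc)) ^ 2 =
        edgeSq P (p 0) (p k.succ) - edgeSq P (p 0) (p k.castSucc) :=
    fun k => Real.sq_sqrt (sub_nonneg.2 (hmono _ _ (Fin.castSucc_le_succ k)))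
  have hsource : edgeSq P (p 0) (p 0) = 0 := edgeSq_self (hP ▸ Set.mem_range_self 0)
  rw [edgeSq_range_eq_sub m (fun k => edgeSq P (p 0) (p k)) (lift_norm_sub_sq hrec hsq)
    Fin.zero_le i, hsource, sub_zero]
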